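/- Let P be a commutative monoid, let mk : P → Associates(P) denote the quotient map of P by its group of units, and suppose β : Associates(P) → P is a monoid homomorphism which is a section of mk (i.e. mk(β(a)) = a for all a). Then for every monoid ideal Q of P, the preimage β⁻¹(Q) equals the image mk(Q) of Q in Associates(P). -/
import Mathlib

/-- Let `P` be a commutative monoid, `mk : P → Associates P` the quotient by units,
and `β : Associates P →* P` a monoid-hom section of `mk`. Then for every monoid ideal
`Q` of `P`, the preimage `β ⁻¹' Q` equals the image `mk '' Q`. -/
theorem preimage_monoid_ideal_of_section
    {P : Type*} [CommMonoid P]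
    (β : Associates P →* P) (hβ : ∀ a : Associates P, Associates.mk (β a) = a)
    (Q : Set P) (hQ : ∀ p : P, ∀ s ∈ Q, p * s ∈ Q) :
    β ⁻¹' Q = Associates.mk '' Q := by
  ext x
  constructor
  · intro hx
    exact ⟨β x, hx, hβ x⟩
  · rintro ⟨q, hq, rfl⟩
    have h : Associates.mk (β (Associates.mk q)) = Associates.mk q := hβ _
    rw [Associates.mk_eq_mk_iff_associated] at h
    obtain ⟨u, hu⟩ := h.symm
    have : β (Associates.mk q) = (u : P) * q := by rw [mul_comm, hu]
    show β (Associates.mk q) ∈ Q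
    rw [this]
    exact hQ u q hq
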